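/- arXiv:1602.02993 — 2 statements merged into one kernel-verified Lean document; each statement's English description precedes it below -/
import Mathlib

section
/- (Riesz–Fischer for gauge integrals) Fix p > 0 and let (fⱼ) be a sequence of measurable point functions on I such that |fⱼ − f_k|^p is HK-integrable for all j,k and for every ε > 0 there is K with ∫_I |fⱼ − f_k|^p dμ < ε for all j > k ≥ K. Then there exists a point function f such that |fⱼ − f|^p is integrable for all j and ∫_I |fⱼ − f|^p dμ → 0; moreover f is unique up to equality almost everywhere. -/
open Set Filter

/-- A brick (compact non-degenerate interval) in `ι → ℝ`. -/
structure Brick (ι : Type*) [Fintype ι] where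
  lower : ι → ℝ
  upper : ι → ℝ
  lt : ∀ j, lower j < upper j

variable {ι : Type*} [Fintype ι]

namespace Brick

/-- The underlying closed set of a brick. -/
def toSet (I : Brick ι) : Set (ι → ℝ) := {x | ∀ j, x j ∈ Set.Icc (I.lower j) (I.upper j)}

/-- The open interior of a brick. -/
def inter (I : Brick ι) : Set (ι → ℝ) := {x | ∀ j, x j ∈ Set.Ioo (I.lower j) (I.upper j)}

/-- The volume of a brick. -/
noncomputable def vol (I : Brick ι) : ℝ := ∏ j, (I.upper j - I.lower j)

end Brick

/-- A tagged division of a brick `I`: finitely many non-overlapping sub-bricks covering `I`,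
each with a tag point belonging to it. -/
structure TaggedDiv {ι : Type*} [Fintype ι] (I : Brick ι) where
  pieces : Finset (Brick ι × (ι → ℝ))
  subset_of_mem : ∀ p ∈ pieces, (p.1 : Brick ι).toSet ⊆ I.toSet
  tag_mem : ∀ p ∈ pieces, p.2 ∈ (p.1 : Brick ι).toSet
  nonoverlap : ∀ p ∈ pieces, ∀ q ∈ pieces, p ≠ q →
    (p.1 : Brick ι).inter ∩ (q.1 : Brick ι).inter = ∅
  cover : I.toSet = ⋃ p ∈ pieces, (p.1 : Brick ι).toSet

/-- A gauge on a brick: a function positive at each point of the brick. -/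
def IsGauge (I : Brick ι) (δ : (ι → ℝ) → ℝ) : Prop := ∀ x ∈ I.toSet, 0 < δ x

/-- A tagged division is compatible with the gauge `δ` if each brick lies in the open ball
of radius `δ` about its tag. -/
def Compat {I : Brick ι} (D : TaggedDiv I) (δ : (ι → ℝ) → ℝ) : Prop :=
  ∀ p ∈ D.pieces, (p.1 : Brick ι).toSet ⊆ Metric.ball p.2 (δ p.2)

/-- The Riemann sum of `f` over a tagged division. -/
noncomputable def riemannSum {I : Brick ι} (f : (ι → ℝ) → ℝ) (D : TaggedDiv I) : ℝ :=
  ∑ p ∈ D.pieces, f p.2 * (p.1 : Brick ι).vol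

/-- `f` has Henstock–Kurzweil integral `A` on the brick `I`. -/
def HasHK (I : Brick ι) (f : (ι → ℝ) → ℝ) (A : ℝ) : Prop :=
  ∀ ε > 0, ∃ δ : (ι → ℝ) → ℝ, IsGauge I δ ∧
    ∀ D : TaggedDiv I, Compat D δ → |riemannSum f D - A| < ε

open scoped ENNReal Classical

/-- The sum of `|h|` over a tagged division, for an interval-point function `h`. -/
noncomputable def varSum {I : Brick ι} (h : Brick ι → (ι → ℝ) → ℝ) (D : TaggedDiv I) : ℝ :=
  ∑ p ∈ D.pieces, |h p.1 p.2|

/-- The (Henstock) variation of an interval-point function `h` on a brick `I`. -/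
noncomputable def variation (I : Brick ι) (h : Brick ι → (ι → ℝ) → ℝ) : ℝ≥0∞ :=
  ⨅ δ ∈ {δ : (ι → ℝ) → ℝ | IsGauge I δ},
    ⨆ D ∈ {D : TaggedDiv I | Compat D δ}, ENNReal.ofReal (varSum h D)

/-- The variation of `h` on `I` with tags restricted to the set `X`. -/
noncomputable def variationOn (I : Brick ι) (h : Brick ι → (ι → ℝ) → ℝ)
    (X : Set (ι → ℝ)) : ℝ≥0∞ :=
  variation I (fun J P => if P ∈ X then h J P else 0)

/-- The outer measure of a set `X` in the brick `I`, defined via the Henstock variation of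
the volume function restricted to `X`. -/
noncomputable def mustar (I : Brick ι) (X : Set (ι → ℝ)) : ℝ≥0∞ :=
  variationOn I (fun J _ => J.vol) X


/-!
Choose a subsequence along which `∫ |f (n (m+1)) - f (n m)|^p` decays geometrically. Chebyshev's
inequality and Borel–Cantelli for the Henstock outer measure `μ*` make `f ∘ n` converge
`μ*`-almost everywhere, to `F` say. For fixed `j` the integrands `|f j - f (n m)|^p` then converge
a.e. to `|f j - F|^p`, and the estimate
`||a|^p - |b|^p| ≤ ((1+θ)^p - 1)(|a|^p + |b|^p) + ((1+θ)/θ)^p |a - b|^p`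
dominates their increments by integrable functions with summable integrals; a Saks–Henstock
argument shows that such a limit is integrable, with the limit of the integrals as integral.
Uniqueness: `|F - G|^p ≤ 2^p (|f j - F|^p + |f j - G|^p)`, so by Chebyshev every set
`{|F - G| ≥ r}` is `μ*`-null.
-/

open MeasureTheory Topology

namespace Brick

lemma mem_toSet {I : Brick ι} {x : ι → ℝ} : x ∈ I.toSet ↔ I.lower ≤ x ∧ x ≤ I.upper := by
  simp only [toSet, mem_ofPred_eq, mem_Icc, Pi.le_def, forall_and]

lemma vol_nonneg (I : Brick ι) : 0 ≤ I.vol :=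
  Finset.prod_nonneg fun j _ => (sub_pos.2 (I.lt j)).le

lemma inter_subset_toSet (I : Brick ι) : I.inter ⊆ I.toSet :=
  fun _ hx j => Ioo_subset_Icc_self (hx j)

lemma inter_mono {J K : Brick ι} (h : J.toSet ⊆ K.toSet) : J.inter ⊆ K.inter := by
  have hJ : J.lower ∈ J.toSet ∧ J.upper ∈ J.toSet :=
    ⟨mem_toSet.2 ⟨le_rfl, fun j => (J.lt j).le⟩, mem_toSet.2 ⟨fun j => (J.lt j).le, le_rfl⟩⟩
  intro x hx j
  exact ⟨(mem_toSet.1 (h hJ.1)).1 j |>.trans_lt (hx j).1,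
    (hx j).2.trans_le ((mem_toSet.1 (h hJ.2)).2 j)⟩

lemma inter_eq_pi (I : Brick ι) : I.inter = univ.pi fun j => Ioo (I.lower j) (I.upper j) := by
  ext; simp [inter]

lemma measurableSet_inter (I : Brick ι) : MeasurableSet I.inter :=
  I.inter_eq_pi ▸ .univ_pi fun _ => measurableSet_Ioo

lemma volume_inter (I : Brick ι) : volume I.inter = ENNReal.ofReal I.vol := by
  rw [inter_eq_pi, volume_pi_pi, vol,
    ENNReal.ofReal_prod_of_nonneg fun j _ => (sub_pos.2 (I.lt j)).le]
  simp

lemma volume_toSet (I : Brick ι) : volume I.toSet = ENNReal.ofReal I.vol := by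
  rw [show I.toSet = univ.pi fun j => Icc (I.lower j) (I.upper j) by
      ext; simp [toSet, -pi_univ_Icc],
    volume_pi_pi, vol, ENNReal.ofReal_prod_of_nonneg fun j _ => (sub_pos.2 (I.lt j)).le]
  simp

def toBox (I : Brick ι) : BoxIntegral.Box ι := ⟨I.lower, I.upper, I.lt⟩

def ofBox (J : BoxIntegral.Box ι) : Brick ι := ⟨J.lower, J.upper, J.lower_lt_upper⟩

lemma toSet_ofBox (J : BoxIntegral.Box ι) : (ofBox J).toSet = BoxIntegral.Box.Icc J := by
  ext x; simp [mem_toSet, ofBox, BoxIntegral.Box.Icc_def]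

lemma toSet_eq_Icc_toBox (I : Brick ι) : I.toSet = BoxIntegral.Box.Icc I.toBox := by
  ext x; simp [mem_toSet, toBox, BoxIntegral.Box.Icc_def]

lemma inter_ofBox_subset (J : BoxIntegral.Box ι) : (ofBox J).inter ⊆ J :=
  fun _ hx i => Ioo_subset_Ioc_self (hx i)

lemma toSet_ofBox_eq_closure (J : BoxIntegral.Box ι) : (ofBox J).toSet = closure J := by
  simp [toSet_ofBox, BoxIntegral.Box.coe_eq_pi, closure_pi_set, BoxIntegral.Box.lower_ne_upper,
    BoxIntegral.Box.Icc_def, ← pi_univ_Icc]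

end Brick

namespace TaggedDiv

noncomputable def ofTaggedPartition (I : Brick ι) (π : BoxIntegral.TaggedPrepartition I.toBox)
    (hπ : π.IsPartition) (hH : π.IsHenstock) : TaggedDiv I where
  pieces := π.boxes.image fun J => (Brick.ofBox J, π.tag J)
  subset_of_mem := by
    simp only [Finset.forall_mem_image, Brick.toSet_eq_Icc_toBox]
    exact fun J hJ => BoxIntegral.Box.le_iff_Icc.1 (π.le_of_mem hJ)
  tag_mem := by
    simp only [Finset.forall_mem_image, Brick.toSet_ofBox]
    exact hH
  nonoverlap := by
    simp only [Finset.forall_mem_image, ne_eq]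
    intro J hJ J' hJ' hne
    have hJJ' : J ≠ J' := by rintro rfl; exact hne rfl
    exact disjoint_iff_inter_eq_empty.1 <| (π.disjoint_coe_of_mem hJ hJ' hJJ').mono
      (Brick.inter_ofBox_subset J) (Brick.inter_ofBox_subset J')
  cover := by
    rw [Brick.toSet_eq_Icc_toBox, ← Brick.toSet_ofBox, Brick.toSet_ofBox_eq_closure,
      ← hπ.iUnion_eq, BoxIntegral.Prepartition.iUnion_def]
    simp_rw [← BoxIntegral.Prepartition.mem_boxes, ← Finset.mem_coe,
      π.boxes.finite_toSet.closure_biUnion]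
    simp [Brick.toSet_ofBox_eq_closure]

lemma tag_mem_brick {I : Brick ι} (D : TaggedDiv I) {p} (hp : p ∈ D.pieces) : p.2 ∈ I.toSet :=
  D.subset_of_mem p hp (D.tag_mem p hp)

end TaggedDiv

/-- Cousin's lemma. -/
theorem exists_compat {I : Brick ι} {δ : (ι → ℝ) → ℝ} (hδ : IsGauge I δ) :
    ∃ D : TaggedDiv I, Compat D δ := by
  let r : (ι → ℝ) → Ioi (0 : ℝ) := fun x =>
    if hx : x ∈ I.toSet then ⟨δ x / 2, mem_Ioi.2 (half_pos (hδ x hx))⟩ else ⟨1, mem_Ioi.2 one_pos⟩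
  obtain ⟨π, hπ, hH, hr, -⟩ :=
    BoxIntegral.Box.exists_taggedPartition_isHenstock_isSubordinate_homothetic I.toBox r
  let D := TaggedDiv.ofTaggedPartition I π hπ hH
  refine ⟨D, fun p hp => ?_⟩
  obtain ⟨J, hJ, rfl⟩ := Finset.mem_image.1 hp
  have ht : π.tag J ∈ I.toSet := D.tag_mem_brick hp
  rw [Brick.toSet_ofBox]
  refine (hr J hJ).trans (Metric.closedBall_subset_ball ?_)
  simp only [r, dif_pos ht]
  linarith [hδ _ ht]

def IsFine (δ : (ι → ℝ) → ℝ) (p : Brick ι × (ι → ℝ)) : Prop :=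
  p.1.toSet ⊆ Metric.ball p.2 (δ p.2)

lemma IsGauge.min {I : Brick ι} {δ₁ δ₂ : (ι → ℝ) → ℝ} (h₁ : IsGauge I δ₁) (h₂ : IsGauge I δ₂) :
    IsGauge I fun x => min (δ₁ x) (δ₂ x) :=
  fun x hx => lt_min (h₁ x hx) (h₂ x hx)

lemma IsFine.mono {δ δ' : (ι → ℝ) → ℝ} {p : Brick ι × (ι → ℝ)} (h : IsFine δ p)
    (hle : δ p.2 ≤ δ' p.2) : IsFine δ' p :=
  h.trans (Metric.ball_subset_ball hle)

lemma Compat.isFine {I : Brick ι} {D : TaggedDiv I} {δ : (ι → ℝ) → ℝ} (h : Compat D δ) {p}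
    (hp : p ∈ D.pieces) : IsFine δ p :=
  h p hp

lemma Compat.mono {I : Brick ι} {D : TaggedDiv I} {δ δ' : (ι → ℝ) → ℝ} (h : Compat D δ)
    (hle : ∀ x, δ x ≤ δ' x) : Compat D δ' :=
  fun _ hp => (h.isFine hp).mono (hle _)

namespace TaggedDiv

variable {I : Brick ι}

def single (J : Brick ι) (t : ι → ℝ) (ht : t ∈ J.toSet) : TaggedDiv J where
  pieces := {(J, t)}
  subset_of_mem := by simp
  tag_mem := by simpa using ht
  nonoverlap := by simp
  cover := by simp

noncomputable def refine (D : TaggedDiv I) (E : ∀ p ∈ D.pieces, TaggedDiv p.1) : TaggedDiv I where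
  pieces := D.pieces.attach.biUnion fun p => (E p.1 p.2).pieces
  subset_of_mem := by
    simp only [Finset.mem_biUnion, Finset.mem_attach, true_and, forall_exists_index]
    exact fun q p hq => ((E p.1 p.2).subset_of_mem q hq).trans (D.subset_of_mem p.1 p.2)
  tag_mem := by
    simp only [Finset.mem_biUnion, Finset.mem_attach, true_and, forall_exists_index]
    exact fun q p hq => (E p.1 p.2).tag_mem q hq
  nonoverlap := by
    simp only [Finset.mem_biUnion, Finset.mem_attach, true_and, forall_exists_index]
    intro q p hq q' p' hq' hne
    by_cases hpp' : p = p'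
    · subst hpp'
      exact (E p.1 p.2).nonoverlap q hq q' hq' hne
    · refine subset_empty_iff.1 <| (D.nonoverlap p.1 p.2 p'.1 p'.2 (Subtype.coe_ne_coe.2 hpp')) ▸
        inter_subset_inter (Brick.inter_mono ((E p.1 p.2).subset_of_mem q hq))
          (Brick.inter_mono ((E p'.1 p'.2).subset_of_mem q' hq'))
  cover := by
    ext x
    simp only [Finset.mem_biUnion, Finset.mem_attach, true_and, mem_iUnion, exists_prop]
    rw [D.cover]
    simp only [mem_iUnion, exists_prop]
    constructor
    · rintro ⟨p, hp, hx⟩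
      rw [(E p hp).cover] at hx
      simp only [mem_iUnion, exists_prop] at hx
      obtain ⟨q, hq, hxq⟩ := hx
      exact ⟨q, ⟨⟨p, hp⟩, hq⟩, hxq⟩
    · rintro ⟨q, ⟨p, hq⟩, hxq⟩
      refine ⟨p.1, p.2, ?_⟩
      rw [(E p.1 p.2).cover]
      exact mem_biUnion hq hxq

lemma mem_refine (D : TaggedDiv I) (E : ∀ p ∈ D.pieces, TaggedDiv p.1) {p q}
    (hp : p ∈ D.pieces) (hq : q ∈ (E p hp).pieces) : q ∈ (D.refine E).pieces :=
  Finset.mem_biUnion.2 ⟨⟨p, hp⟩, Finset.mem_attach _ _, hq⟩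

lemma compat_refine (D : TaggedDiv I) (E : ∀ p ∈ D.pieces, TaggedDiv p.1) {δ : (ι → ℝ) → ℝ}
    (hE : ∀ p hp, Compat (E p hp) δ) : Compat (D.refine E) δ := by
  intro q hq
  obtain ⟨p, -, hq⟩ := Finset.mem_biUnion.1 hq
  exact hE p.1 p.2 q hq

lemma exists_compat_superset {γ : (ι → ℝ) → ℝ} (hγ : IsGauge I γ) (D : TaggedDiv I)
    {S : Finset (Brick ι × (ι → ℝ))} (hS : S ⊆ D.pieces) (hSγ : ∀ p ∈ S, IsFine γ p) :
    ∃ D' : TaggedDiv I, Compat D' γ ∧ S ⊆ D'.pieces := by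
  have hcousin : ∀ p ∈ D.pieces, ∃ E : TaggedDiv p.1, Compat E γ :=
    fun p hp => exists_compat fun x hx => hγ x (D.subset_of_mem p hp hx)
  choose E hE using hcousin
  let E' : ∀ p ∈ D.pieces, TaggedDiv p.1 := fun p hp =>
    if p ∈ S then single p.1 p.2 (D.tag_mem p hp) else E p hp
  refine ⟨D.refine E', D.compat_refine E' fun p hp => ?_, fun p hpS => ?_⟩
  · by_cases hpS : p ∈ S
    · simpa [E', hpS, single, Compat, IsFine] using hSγ p hpS
    · simpa [E', hpS] using hE p hp
  · exact D.mem_refine E' (hS hpS) (by simp [E', hpS, single])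

lemma sum_vol_le (D : TaggedDiv I) : ∑ p ∈ D.pieces, p.1.vol ≤ I.vol := by
  have hdisj : (D.pieces : Set (Brick ι × (ι → ℝ))).PairwiseDisjoint fun p => p.1.inter :=
    fun p hp q hq hpq => disjoint_iff_inter_eq_empty.2 (D.nonoverlap p hp q hq hpq)
  rw [← ENNReal.ofReal_le_ofReal_iff I.vol_nonneg,
    ENNReal.ofReal_sum_of_nonneg fun p _ => p.1.vol_nonneg]
  rw [Finset.sum_congr rfl fun p _ => p.1.volume_inter.symm, ← I.volume_toSet,
    ← measure_biUnion_finset hdisj fun p _ => p.1.measurableSet_inter]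
  exact measure_mono <| iUnion₂_subset fun p hp =>
    p.1.inter_subset_toSet.trans (D.subset_of_mem p hp)

end TaggedDiv

section HK

variable {I : Brick ι} {f g w : (ι → ℝ) → ℝ} {A B W : ℝ}

lemma riemannSum_add (D : TaggedDiv I) :
    riemannSum (fun x => f x + g x) D = riemannSum f D + riemannSum g D := by
  simp [riemannSum, add_mul, Finset.sum_add_distrib]

lemma riemannSum_const_mul (c : ℝ) (D : TaggedDiv I) :
    riemannSum (fun x => c * f x) D = c * riemannSum f D := by
  simp [riemannSum, Finset.mul_sum, mul_assoc]

lemma abs_riemannSum_sub_le (D : TaggedDiv I) :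
    |riemannSum f D - riemannSum g D| ≤ ∑ p ∈ D.pieces, |f p.2 - g p.2| * p.1.vol := by
  rw [riemannSum, riemannSum, ← Finset.sum_sub_distrib]
  refine (Finset.abs_sum_le_sum_abs _ _).trans_eq (Finset.sum_congr rfl fun p _ => ?_)
  rw [← sub_mul, abs_mul, abs_of_nonneg p.1.vol_nonneg]

lemma HasHK.of_forall_le_mul (K : ℝ) (h : ∀ ε > 0, ∃ δ, IsGauge I δ ∧
    ∀ D : TaggedDiv I, Compat D δ → |riemannSum f D - A| ≤ K * ε) : HasHK I f A := by
  intro ε hε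
  obtain ⟨δ, hδ, hD⟩ := h (ε / (|K| + 1)) (by positivity)
  refine ⟨δ, hδ, fun D hDδ => (hD D hDδ).trans_lt ?_⟩
  rw [mul_div_assoc', div_lt_iff₀ (by positivity)]
  nlinarith [le_abs_self K]

lemma HasHK.add (hf : HasHK I f A) (hg : HasHK I g B) :
    HasHK I (fun x => f x + g x) (A + B) := by
  refine .of_forall_le_mul 2 fun ε hε => ?_
  obtain ⟨δ₁, hδ₁, h₁⟩ := hf ε hε
  obtain ⟨δ₂, hδ₂, h₂⟩ := hg ε hε
  refine ⟨_, hδ₁.min hδ₂, fun D hD => ?_⟩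
  have e₁ := h₁ D (hD.mono fun x => min_le_left _ _)
  have e₂ := h₂ D (hD.mono fun x => min_le_right _ _)
  rw [riemannSum_add, add_sub_add_comm]
  linarith [abs_add_le (riemannSum f D - A) (riemannSum g D - B)]

lemma HasHK.const_mul (c : ℝ) (hf : HasHK I f A) : HasHK I (fun x => c * f x) (c * A) := by
  refine .of_forall_le_mul |c| fun ε hε => ?_
  obtain ⟨δ, hδ, h⟩ := hf ε hε
  refine ⟨δ, hδ, fun D hD => ?_⟩
  rw [riemannSum_const_mul, ← mul_sub, abs_mul]
  exact mul_le_mul_of_nonneg_left (h D hD).le (abs_nonneg c)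

lemma HasHK.sub (hf : HasHK I f A) (hg : HasHK I g B) :
    HasHK I (fun x => f x - g x) (A - B) := by
  simpa [sub_eq_add_neg] using hf.add (hg.const_mul (-1))

lemma hasHK_zero : HasHK I (fun _ => 0) 0 :=
  fun _ hε => ⟨fun _ => 1, fun _ _ => one_pos, fun _ _ => by simpa [riemannSum] using hε⟩

lemma HasHK.le (hf : HasHK I f A) (hg : HasHK I g B) (hle : ∀ x ∈ I.toSet, f x ≤ g x) :
    A ≤ B := by
  refine le_of_forall_pos_lt_add fun ε hε => ?_
  obtain ⟨δ₁, hδ₁, h₁⟩ := hf (ε / 2) (half_pos hε)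
  obtain ⟨δ₂, hδ₂, h₂⟩ := hg (ε / 2) (half_pos hε)
  obtain ⟨D, hD⟩ := exists_compat (hδ₁.min hδ₂)
  have hfg : riemannSum f D ≤ riemannSum g D := Finset.sum_le_sum fun p hp =>
    mul_le_mul_of_nonneg_right (hle p.2 (D.tag_mem_brick hp)) p.1.vol_nonneg
  have e₁ := abs_lt.1 (h₁ D (hD.mono fun x => min_le_left _ _))
  have e₂ := abs_lt.1 (h₂ D (hD.mono fun x => min_le_right _ _))
  linarith [e₁.1, e₂.2]

lemma HasHK.unique (hf : HasHK I f A) (hf' : HasHK I f B) : A = B :=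
  (hf.le hf' fun _ _ => le_rfl).antisymm (hf'.le hf fun _ _ => le_rfl)

lemma HasHK.nonneg (hf : HasHK I f A) (h0 : ∀ x ∈ I.toSet, 0 ≤ f x) : 0 ≤ A :=
  hasHK_zero.le hf h0

lemma HasHK.abs_le (hf : HasHK I f A) (hw : HasHK I w W) (hle : ∀ x ∈ I.toSet, |f x| ≤ w x) :
    |A| ≤ W := by
  have := (hw.const_mul (-1)).le hf fun x hx => by linarith [neg_abs_le (f x), hle x hx]
  exact _root_.abs_le.2 ⟨by linarith, hf.le hw fun x hx => (le_abs_self _).trans (hle x hx)⟩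

/-- Saks–Henstock lemma, one-sided, for a nonnegative integrand. -/
lemma HasHK.exists_gauge_sum_le (hf : HasHK I f A) (h0 : ∀ x ∈ I.toSet, 0 ≤ f x) {ε : ℝ}
    (hε : 0 < ε) : ∃ γ, IsGauge I γ ∧ ∀ (D : TaggedDiv I) (S : Finset (Brick ι × (ι → ℝ))),
      S ⊆ D.pieces → (∀ p ∈ S, IsFine γ p) → ∑ p ∈ S, f p.2 * p.1.vol ≤ A + ε := by
  obtain ⟨γ, hγ, h⟩ := hf ε hε
  refine ⟨γ, hγ, fun D S hS hSγ => ?_⟩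
  obtain ⟨D', hD', hSD'⟩ := D.exists_compat_superset hγ hS hSγ
  have hsub : ∑ p ∈ S, f p.2 * p.1.vol ≤ riemannSum f D' :=
    Finset.sum_le_sum_of_subset_of_nonneg hSD' fun p hp _ =>
      mul_nonneg (h0 p.2 (D'.tag_mem_brick hp)) p.1.vol_nonneg
  linarith [(abs_lt.1 (h D' hD')).2]

end HK

section OuterMeasure

variable {I : Brick ι}

lemma varSum_vol_indicator (X : Set (ι → ℝ)) (D : TaggedDiv I) :
    varSum (fun J P => if P ∈ X then J.vol else 0) D = ∑ p ∈ D.pieces with p.2 ∈ X, p.1.vol := by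
  rw [varSum, Finset.sum_filter]
  exact Finset.sum_congr rfl fun p _ => by split_ifs <;> simp [abs_of_nonneg p.1.vol_nonneg]

lemma mustar_le_ofReal {X : Set (ι → ℝ)} {c : ℝ} {γ : (ι → ℝ) → ℝ} (hγ : IsGauge I γ)
    (h : ∀ D : TaggedDiv I, Compat D γ → ∑ p ∈ D.pieces with p.2 ∈ X, p.1.vol ≤ c) :
    mustar I X ≤ ENNReal.ofReal c :=
  (iInf₂_le γ hγ).trans <| iSup₂_le fun D hD =>
    ENNReal.ofReal_le_ofReal <| (varSum_vol_indicator X D).trans_le (h D hD)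

/-- Saks–Henstock lemma for the volume restricted to a set of small outer measure. -/
lemma exists_gauge_sum_vol_le {X : Set (ι → ℝ)} {c : ℝ} (h : mustar I X < ENNReal.ofReal c) :
    ∃ γ, IsGauge I γ ∧ ∀ (D : TaggedDiv I) (S : Finset (Brick ι × (ι → ℝ))), S ⊆ D.pieces →
      (∀ p ∈ S, IsFine γ p) → (∀ p ∈ S, p.2 ∈ X) → ∑ p ∈ S, p.1.vol ≤ c := by
  obtain ⟨γ, hγ, hlt⟩ : ∃ γ, IsGauge I γ ∧ ∀ D : TaggedDiv I, Compat D γ →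
      ENNReal.ofReal (varSum (fun J P => if P ∈ X then J.vol else 0) D) < ENNReal.ofReal c := by
    simp only [mustar, variationOn, variation, iInf_lt_iff] at h
    obtain ⟨γ, hγ, h⟩ := h
    exact ⟨γ, hγ, fun D hD => (le_biSup (fun D => ENNReal.ofReal
      (varSum (fun J P => if P ∈ X then J.vol else 0) D)) hD).trans_lt h⟩
  refine ⟨γ, hγ, fun D S hS hSγ hSX => ?_⟩
  obtain ⟨D', hD', hSD'⟩ := D.exists_compat_superset hγ hS hSγ
  have hc := (ENNReal.ofReal_lt_ofReal_iff'.1 (hlt D' hD')).1.le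
  rw [varSum_vol_indicator] at hc
  refine le_trans ?_ hc
  rw [← Finset.filter_true_of_mem hSX]
  exact Finset.sum_le_sum_of_subset_of_nonneg (Finset.filter_subset_filter _ hSD')
    fun p _ _ => p.1.vol_nonneg

lemma mustar_mono {X Y : Set (ι → ℝ)} (h : X ⊆ Y) : mustar I X ≤ mustar I Y := by
  refine iInf₂_mono fun δ _ => iSup₂_mono fun D _ => ENNReal.ofReal_le_ofReal ?_
  rw [varSum_vol_indicator, varSum_vol_indicator]
  exact Finset.sum_le_sum_of_subset_of_nonneg (Finset.monotone_filter_right _ fun _ _ hx => h hx)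
    fun p _ _ => p.1.vol_nonneg

lemma mustar_empty : mustar I ∅ = 0 :=
  nonpos_iff_eq_zero.1 <| (mustar_le_ofReal (γ := fun _ => 1) (fun _ _ => one_pos)
    fun D _ => by simp).trans_eq ENNReal.ofReal_zero

/-- The gauge at `x` is the one chosen for `X (idx x)`. -/
lemma exists_gauge_sum_mul_vol_le {X : ℕ → Set (ι → ℝ)} {c : ℕ → ℝ}
    (hX : ∀ m, mustar I (X m) < ENNReal.ofReal (c m)) (idx : (ι → ℝ) → ℕ) :
    ∃ δ, IsGauge I δ ∧ ∀ D : TaggedDiv I, Compat D δ → ∀ g : ℕ → ℝ, (∀ m, 0 ≤ g m) →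
      ∑ p ∈ D.pieces with p.2 ∈ X (idx p.2), g (idx p.2) * p.1.vol ≤
        ∑ m ∈ D.pieces.image (idx ·.2), g m * c m := by
  choose γ hγ hγc using fun m => exists_gauge_sum_vol_le (hX m)
  refine ⟨fun x => γ (idx x) x, fun x hx => hγ _ x hx, fun D hD g hg => ?_⟩
  rw [← Finset.sum_fiberwise_of_maps_to (g := (idx ·.2)) (t := D.pieces.image (idx ·.2))
    fun p hp => Finset.mem_image_of_mem _ (Finset.mem_filter.1 hp).1]
  refine Finset.sum_le_sum fun m _ => ?_
  rw [Finset.sum_congr rfl fun p hp => by rw [(Finset.mem_filter.1 hp).2], ← Finset.mul_sum]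
  refine mul_le_mul_of_nonneg_left (hγc m D _ ?_ (fun p hp => ?_) fun p hp => ?_) (hg m)
  · exact (Finset.filter_subset _ _).trans (Finset.filter_subset _ _)
  · simp only [Finset.mem_filter] at hp
    simpa [hp.2, IsFine] using hD p hp.1.1
  · simp only [Finset.mem_filter] at hp
    simpa [hp.2] using hp.1.2

lemma mustar_iUnion_le (X : ℕ → Set (ι → ℝ)) :
    mustar I (⋃ m, X m) ≤ ∑' m, mustar I (X m) := by
  refine ENNReal.le_of_forall_pos_le_add fun ε hε hfin => ?_
  have hX : ∀ m, mustar I (X m) ≠ ∞ := ENNReal.ne_top_of_tsum_ne_top hfin.ne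
  obtain ⟨ε', hε', hε'sum⟩ :=
    (countable_univ (α := ℕ)).exists_pos_forall_sum_le (NNReal.coe_pos.2 hε)
  have hlt : ∀ m, mustar I (X m) < ENNReal.ofReal ((mustar I (X m)).toReal + ε' m) := by
    intro m
    rw [ENNReal.ofReal_add ENNReal.toReal_nonneg (hε' m).le, ENNReal.ofReal_toReal (hX m)]
    exact ENNReal.lt_add_right (hX m) (ENNReal.ofReal_pos.2 (hε' m)).ne'
  choose! idx hidx using fun x (hx : x ∈ ⋃ m, X m) => mem_iUnion.1 hx
  obtain ⟨δ, hδ, hsum⟩ := exists_gauge_sum_mul_vol_le hlt idx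
  refine (mustar_le_ofReal (c := ∑' m, (mustar I (X m)).toReal + ε) hδ fun D hD => ?_).trans ?_
  · calc ∑ p ∈ D.pieces with p.2 ∈ ⋃ m, X m, p.1.vol
        ≤ ∑ p ∈ D.pieces with p.2 ∈ X (idx p.2), 1 * p.1.vol := by
          simp only [one_mul]
          exact Finset.sum_le_sum_of_subset_of_nonneg
            (Finset.monotone_filter_right _ fun x _ hx => hidx x.2 hx) fun p _ _ => p.1.vol_nonneg
      _ ≤ ∑ m ∈ D.pieces.image (idx ·.2), 1 * ((mustar I (X m)).toReal + ε' m) :=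
          hsum D hD _ fun _ => zero_le_one
      _ ≤ ∑' m, (mustar I (X m)).toReal + ε := by
          simp only [one_mul, Finset.sum_add_distrib]
          exact add_le_add (Summable.sum_le_tsum _ (fun _ _ => ENNReal.toReal_nonneg)
            (ENNReal.summable_toReal hfin.ne)) (hε'sum _ (subset_univ _))
  · rw [← ENNReal.tsum_toReal_eq hX, ENNReal.ofReal_add ENNReal.toReal_nonneg ε.coe_nonneg,
      ENNReal.ofReal_toReal hfin.ne, ENNReal.ofReal_coe_nnreal]

noncomputable def hkOuterMeasure (I : Brick ι) : OuterMeasure (ι → ℝ) where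
  measureOf := mustar I
  empty := mustar_empty
  mono := mustar_mono
  iUnion_nat X _ := mustar_iUnion_le X

end OuterMeasure

section Null

variable {I : Brick ι} {f g w : (ι → ℝ) → ℝ} {A W : ℝ}

/-- Chebyshev's inequality for the Henstock outer measure. -/
lemma mustar_setOf_le_le (hw : HasHK I w W) (h0 : ∀ x ∈ I.toSet, 0 ≤ w x) {a : ℝ}
    (ha : 0 < a) : mustar I {x | a ≤ w x} ≤ ENNReal.ofReal (W / a) := by
  refine ENNReal.le_of_forall_pos_le_add fun η hη _ => ?_
  obtain ⟨γ, hγ, h⟩ := hw (a * η) (by positivity)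
  refine (mustar_le_ofReal (c := W / a + η) hγ fun D hD => ?_).trans ?_
  · have hsum : a * ∑ p ∈ D.pieces with p.2 ∈ {x | a ≤ w x}, p.1.vol ≤ riemannSum w D := by
      rw [Finset.mul_sum]
      refine (Finset.sum_le_sum fun p hp => mul_le_mul_of_nonneg_right
        (Finset.mem_filter.1 hp).2 p.1.vol_nonneg).trans ?_
      exact Finset.sum_le_sum_of_subset_of_nonneg (Finset.filter_subset _ _) fun p hp _ =>
        mul_nonneg (h0 p.2 (D.tag_mem_brick hp)) p.1.vol_nonneg
    rw [div_add' _ _ _ ha.ne', le_div_iff₀ ha]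
    linarith [(abs_lt.1 (h D hD)).2]
  · exact ENNReal.ofReal_add_le.trans_eq (by rw [ENNReal.ofReal_coe_nnreal])

lemma mustar_setOf_le_abs_le {p : ℝ} (hp : 0 < p) (hf : HasHK I (fun x => |f x| ^ p) A) {r : ℝ}
    (hr : 0 < r) : mustar I {x | r ≤ |f x|} ≤ ENNReal.ofReal (A / r ^ p) :=
  (mustar_mono fun _ hx => Real.rpow_le_rpow hr.le hx hp.le).trans <|
    mustar_setOf_le_le hf (fun _ _ => by positivity) (by positivity)

/-- Patch gauges along the level sets `⌊|φ|⌋₊ = ℓ`, the one for level `ℓ` bounding the volume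
sum over tags in the null set `{φ ≠ 0}` by `ε' ℓ / (ℓ + 1)`. -/
lemma exists_gauge_sum_abs_mul_vol_le {φ : (ι → ℝ) → ℝ} (hφ : φ =ᵐ[hkOuterMeasure I] 0)
    {ε : ℝ} (hε : 0 < ε) : ∃ δ, IsGauge I δ ∧
      ∀ D : TaggedDiv I, Compat D δ → ∑ p ∈ D.pieces, |φ p.2| * p.1.vol ≤ ε := by
  set N := {x | φ x ≠ 0}
  have hN : mustar I N = 0 := ae_iff.1 hφ
  obtain ⟨ε', hε', hε'sum⟩ := (countable_univ (α := ℕ)).exists_pos_forall_sum_le hε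
  obtain ⟨δ, hδ, hsum⟩ := exists_gauge_sum_mul_vol_le (X := fun _ => N)
    (c := fun ℓ => ε' ℓ / (ℓ + 1))
    (fun ℓ => hN ▸ ENNReal.ofReal_pos.2 (div_pos (hε' ℓ) (Nat.cast_add_one_pos ℓ)))
    fun x => ⌊|φ x|⌋₊
  refine ⟨δ, hδ, fun D hD => ?_⟩
  calc ∑ p ∈ D.pieces, |φ p.2| * p.1.vol
      = ∑ p ∈ D.pieces with p.2 ∈ N, |φ p.2| * p.1.vol := by
        rw [Finset.sum_filter]
        exact Finset.sum_congr rfl fun p _ => by split_ifs with h <;> simp_all [N]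
    _ ≤ ∑ p ∈ D.pieces with p.2 ∈ N, ((⌊|φ p.2|⌋₊ : ℝ) + 1) * p.1.vol :=
        Finset.sum_le_sum fun p _ =>
          mul_le_mul_of_nonneg_right (Nat.lt_floor_add_one _).le p.1.vol_nonneg
    _ ≤ ∑ ℓ ∈ D.pieces.image (fun p => ⌊|φ p.2|⌋₊), ((ℓ : ℝ) + 1) * (ε' ℓ / (ℓ + 1)) :=
        by convert hsum D hD (fun ℓ => (ℓ : ℝ) + 1) fun ℓ => (Nat.cast_add_one_pos ℓ).le
    _ = ∑ ℓ ∈ D.pieces.image (fun p => ⌊|φ p.2|⌋₊), ε' ℓ :=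
        Finset.sum_congr rfl fun ℓ _ => mul_div_cancel₀ _ (Nat.cast_add_one_pos ℓ).ne'
    _ ≤ ε := hε'sum _ (subset_univ _)

lemma HasHK.congr_ae (hf : HasHK I f A) (hfg : f =ᵐ[hkOuterMeasure I] g) : HasHK I g A := by
  refine .of_forall_le_mul 2 fun ε hε => ?_
  obtain ⟨δ₁, hδ₁, h₁⟩ := hf ε hε
  obtain ⟨δ₂, hδ₂, h₂⟩ := exists_gauge_sum_abs_mul_vol_le (φ := fun x => g x - f x)
    (hfg.mono fun x hx => by simp [hx]) hε
  refine ⟨_, hδ₁.min hδ₂, fun D hD => ?_⟩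
  have e₁ := h₁ D (hD.mono fun x => min_le_left _ _)
  have e₂ := (abs_riemannSum_sub_le D).trans (h₂ D (hD.mono fun x => min_le_right _ _))
  linarith [abs_sub_le (riemannSum g D) (riemannSum f D) A]

end Null

section Rpow

variable {p : ℝ}

lemma add_rpow_le_mul_rpow_add_mul_rpow (hp : 0 < p) {x y θ : ℝ} (hx : 0 ≤ x) (hy : 0 ≤ y)
    (hθ : 0 < θ) : (x + y) ^ p ≤ (1 + θ) ^ p * x ^ p + ((1 + θ) / θ) ^ p * y ^ p := by
  have hxp : 0 ≤ (1 + θ) ^ p * x ^ p := by positivity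
  have hyp : 0 ≤ ((1 + θ) / θ) ^ p * y ^ p := by positivity
  rcases le_or_gt y (θ * x) with hyx | hxy
  · have := Real.rpow_le_rpow (by positivity) (show x + y ≤ (1 + θ) * x by nlinarith) hp.le
    rw [Real.mul_rpow (by positivity) hx] at this
    linarith
  · have h : x + y ≤ (1 + θ) / θ * y := by
      rw [div_mul_eq_mul_div, le_div_iff₀ hθ]
      nlinarith
    have := Real.rpow_le_rpow (by positivity) h hp.le
    rw [Real.mul_rpow (by positivity) hy] at this
    linarith

lemma abs_sub_rpow_le (hp : 0 < p) (a b c : ℝ) :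
    |a - c| ^ p ≤ 2 ^ p * (|a - b| ^ p + |b - c| ^ p) := by
  have h := add_rpow_le_mul_rpow_add_mul_rpow hp (abs_nonneg (a - b)) (abs_nonneg (b - c)) one_pos
  norm_num at h
  calc |a - c| ^ p ≤ (|a - b| + |b - c|) ^ p :=
        Real.rpow_le_rpow (abs_nonneg _) (abs_sub_le a b c) hp.le
    _ ≤ 2 ^ p * (|a - b| ^ p + |b - c| ^ p) := by linarith

lemma abs_rpow_sub_abs_rpow_le (hp : 0 < p) {θ : ℝ} (hθ : 0 < θ) (a b : ℝ) :
    |a| ^ p - |b| ^ p ≤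
      ((1 + θ) ^ p - 1) * (|a| ^ p + |b| ^ p) + ((1 + θ) / θ) ^ p * |a - b| ^ p := by
  have h₁ : |a| ^ p ≤ (|b| + |a - b|) ^ p :=
    Real.rpow_le_rpow (abs_nonneg a) (by linarith [abs_sub_abs_le_abs_sub a b]) hp.le
  have h₂ := add_rpow_le_mul_rpow_add_mul_rpow hp (abs_nonneg b) (abs_nonneg (a - b)) hθ
  have h₃ : 1 ≤ (1 + θ) ^ p := Real.one_le_rpow (by linarith) hp.le
  nlinarith [Real.rpow_nonneg (abs_nonneg a) p]

lemma abs_abs_rpow_sub_abs_rpow_le (hp : 0 < p) {θ : ℝ} (hθ : 0 < θ) (a b : ℝ) :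
    |(|a| ^ p - |b| ^ p)| ≤
      ((1 + θ) ^ p - 1) * (|a| ^ p + |b| ^ p) + ((1 + θ) / θ) ^ p * |a - b| ^ p := by
  have := abs_rpow_sub_abs_rpow_le hp hθ b a
  rw [abs_sub_comm b a, add_comm (|b| ^ p)] at this
  exact abs_le.2 ⟨by linarith, abs_rpow_sub_abs_rpow_le hp hθ a b⟩

lemma exists_pos_one_add_rpow_eq (hp : 0 < p) {ζ : ℝ} (hζ : 0 < ζ) :
    ∃ θ, 0 < θ ∧ (1 + θ) ^ p = 1 + ζ := by
  refine ⟨(1 + ζ) ^ p⁻¹ - 1, sub_pos.2 (Real.one_lt_rpow (by linarith) (inv_pos.2 hp)), ?_⟩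
  rw [add_sub_cancel, ← Real.rpow_mul (by linarith), inv_mul_cancel₀ hp.ne', Real.rpow_one]

end Rpow

section Convergence

variable {I : Brick ι}

/-- The gauge at `x` is the minimum of the gauges of the Saks–Henstock lemma for the first
`N x + 1` terms. -/
lemma exists_gauge_sum_sum_Ico_le {w : ℕ → (ι → ℝ) → ℝ} {W : ℕ → ℝ}
    (hw : ∀ k, HasHK I (w k) (W k)) (hw0 : ∀ k, ∀ x ∈ I.toSet, 0 ≤ w k x) (hW : Summable W)
    (M : ℕ) (N : (ι → ℝ) → ℕ) {ε : ℝ} (hε : 0 < ε) :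
    ∃ δ, IsGauge I δ ∧ ∀ D : TaggedDiv I, Compat D δ →
      ∑ p ∈ D.pieces, (∑ k ∈ Finset.Ico M (N p.2), w k p.2) * p.1.vol ≤
        ∑' k, W (k + M) + ε := by
  obtain ⟨ε', hε', hε'sum⟩ := (countable_univ (α := ℕ)).exists_pos_forall_sum_le hε
  choose γ hγ hγS using fun k => (hw k).exists_gauge_sum_le (hw0 k) (hε' k)
  refine ⟨fun x => (Finset.range (N x + 1)).inf' Finset.nonempty_range_add_one (γ · x),
    fun x hx => (Finset.lt_inf'_iff _).2 fun k _ => hγ k x hx, fun D hD => ?_⟩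
  set K := D.pieces.sup (N ·.2)
  have hregroup : ∑ p ∈ D.pieces, (∑ k ∈ Finset.Ico M (N p.2), w k p.2) * p.1.vol =
      ∑ k ∈ Finset.Ico M K, ∑ p ∈ D.pieces with k < N p.2, w k p.2 * p.1.vol := by
    simp_rw [Finset.sum_mul]
    refine Finset.sum_comm' fun p k => ?_
    simp only [Finset.mem_Ico, Finset.mem_filter]
    have hNK : p ∈ D.pieces → N p.2 ≤ K := fun hp => Finset.le_sup (f := (N ·.2)) hp
    constructor
    · rintro ⟨hp, hMk, hkN⟩; exact ⟨⟨hp, hkN⟩, hMk, hkN.trans_le (hNK hp)⟩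
    · rintro ⟨⟨hp, hkN⟩, hMk, -⟩; exact ⟨hp, hMk, hkN⟩
  have hWtail : ∑ k ∈ Finset.Ico M K, W k ≤ ∑' k, W (k + M) := by
    rw [Finset.sum_Ico_eq_sum_range]
    simp_rw [add_comm M]
    exact Summable.sum_le_tsum _ (fun k _ => (hw _).nonneg (hw0 _))
      ((summable_nat_add_iff M).2 hW)
  rw [hregroup]
  calc _ ≤ ∑ k ∈ Finset.Ico M K, (W k + ε' k) := Finset.sum_le_sum fun k _ =>
        hγS k D _ (Finset.filter_subset _ _) fun p hp => by
          obtain ⟨hp, hkN⟩ := Finset.mem_filter.1 hp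
          exact (hD.isFine hp).mono (Finset.inf'_le _ (Finset.mem_range.2 (by omega)))
    _ ≤ ∑' k, W (k + M) + ε := by
        rw [Finset.sum_add_distrib]
        exact add_le_add hWtail (hε'sum _ (subset_univ _))

lemma exists_tendsto_of_abs_sub_le {u w : ℕ → (ι → ℝ) → ℝ} {a W : ℕ → ℝ}
    (hu : ∀ m, HasHK I (u m) (a m)) (hw : ∀ m, HasHK I (w m) (W m)) (hW : Summable W)
    (hdom : ∀ m x, |u (m + 1) x - u m x| ≤ w m x) :
    ∃ A, Tendsto a atTop (𝓝 A) ∧ ∀ M, |a M - A| ≤ ∑' k, W (k + M) := by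
  have hstep : ∀ m, dist (a m) (a (m + 1)) ≤ W m := fun m => by
    rw [dist_comm, Real.dist_eq]
    exact ((hu (m + 1)).sub (hu m)).abs_le (hw m) fun x _ => hdom m x
  obtain ⟨A, hA⟩ := cauchySeq_tendsto_of_complete (cauchySeq_of_dist_le_of_summable W hstep hW)
  refine ⟨A, hA, fun M => ?_⟩
  rw [← Real.dist_eq]
  simpa only [add_comm M] using dist_le_tsum_of_dist_le_of_tendsto W hstep hW hA M

theorem exists_tendsto_hasHK_of_tendsto {u w : ℕ → (ι → ℝ) → ℝ} {h : (ι → ℝ) → ℝ}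
    {a W : ℕ → ℝ} (hu : ∀ m, HasHK I (u m) (a m)) (hw : ∀ m, HasHK I (w m) (W m))
    (hW : Summable W) (hdom : ∀ m x, |u (m + 1) x - u m x| ≤ w m x)
    (hlim : ∀ x, Tendsto (u · x) atTop (𝓝 (h x))) :
    ∃ A, Tendsto a atTop (𝓝 A) ∧ HasHK I h A := by
  obtain ⟨A, hA, haA⟩ := exists_tendsto_of_abs_sub_le hu hw hW hdom
  refine ⟨A, hA, .of_forall_le_mul (I.vol + 4) fun ε hε => ?_⟩
  obtain ⟨M, hM⟩ := ((tendsto_sum_nat_add W).eventually (ge_mem_nhds hε)).exists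
  obtain ⟨δ₀, hδ₀, h₀⟩ := hu M ε hε
  choose N hNM hN using fun x =>
    ((eventually_ge_atTop M).and ((hlim x).eventually (Metric.closedBall_mem_nhds _ hε))).exists
  obtain ⟨δ₁, hδ₁, h₁⟩ := exists_gauge_sum_sum_Ico_le hw
    (fun k x _ => (abs_nonneg _).trans (hdom k x)) hW M N hε
  refine ⟨_, hδ₀.min hδ₁, fun D hD => ?_⟩
  have hpoint : ∀ x, |h x - u M x| ≤ ε + ∑ k ∈ Finset.Ico M (N x), w k x := fun x => calc
    |h x - u M x| ≤ |u (N x) x - h x| + dist (u M x) (u (N x) x) := by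
        rw [Real.dist_eq, abs_sub_comm (u (N x) x), abs_sub_comm (u M x)]
        exact abs_sub_le _ _ _
    _ ≤ ε + ∑ k ∈ Finset.Ico M (N x), w k x := by
        refine add_le_add (hN x) ((dist_le_Ico_sum_dist (u · x) (hNM x)).trans
          (Finset.sum_le_sum fun k _ => ?_))
        rw [dist_comm, Real.dist_eq]
        exact hdom k x
  have hsum : |riemannSum h D - riemannSum (u M) D| ≤ ε * I.vol + (∑' k, W (k + M) + ε) := calc
    _ ≤ ∑ p ∈ D.pieces, |h p.2 - u M p.2| * p.1.vol := abs_riemannSum_sub_le D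
    _ ≤ ∑ p ∈ D.pieces, (ε * p.1.vol + (∑ k ∈ Finset.Ico M (N p.2), w k p.2) * p.1.vol) :=
        Finset.sum_le_sum fun p _ => by
          rw [← add_mul]
          exact mul_le_mul_of_nonneg_right (hpoint p.2) p.1.vol_nonneg
    _ ≤ ε * I.vol + (∑' k, W (k + M) + ε) := by
        rw [Finset.sum_add_distrib, ← Finset.mul_sum]
        exact add_le_add (mul_le_mul_of_nonneg_left D.sum_vol_le hε.le)
          (h₁ D (hD.mono fun x => min_le_right _ _))
  have hM' := h₀ D (hD.mono fun x => min_le_left _ _)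
  linarith [haA M, abs_sub_le (riemannSum h D) (riemannSum (u M) D) A,
    abs_sub_le (riemannSum (u M) D) (a M) A]

theorem exists_tendsto_hasHK_of_ae_tendsto {u w : ℕ → (ι → ℝ) → ℝ} {h : (ι → ℝ) → ℝ}
    {a W : ℕ → ℝ} (hu : ∀ m, HasHK I (u m) (a m)) (hw : ∀ m, HasHK I (w m) (W m))
    (hW : Summable W) (hdom : ∀ m x, |u (m + 1) x - u m x| ≤ w m x)
    (hlim : ∀ᵐ x ∂hkOuterMeasure I, Tendsto (u · x) atTop (𝓝 (h x))) :
    ∃ A, Tendsto a atTop (𝓝 A) ∧ HasHK I h A := by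
  set E := {x | Tendsto (u · x) atTop (𝓝 (h x))}
  have hE : ∀ᵐ x ∂hkOuterMeasure I, x ∈ E := hlim
  obtain ⟨A, hA, hHK⟩ := exists_tendsto_hasHK_of_tendsto (u := fun m => E.indicator (u m))
    (h := E.indicator h) (fun m => (hu m).congr_ae (hE.mono fun x hx => by simp [hx])) hw hW
    (fun m x => by
      by_cases hx : x ∈ E
      · simpa [hx] using hdom m x
      · simpa [hx] using (abs_nonneg _).trans (hdom m x))
    fun x => by
      by_cases hx : x ∈ E
      · simp only [indicator_of_mem hx]
        exact hx
      · simp [hx]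
  exact ⟨A, hA, hHK.congr_ae (hE.mono fun x hx => by simp [hx])⟩

end Convergence

lemma ae_exists_tendsto_of_summable {α F : Type*} [FunLike F (Set α) ℝ≥0∞]
    [OuterMeasureClass F α] {μ : F} {g : ℕ → α → ℝ} {r : ℕ → ℝ} (hr : Summable r)
    (hμ : ∑' m, μ {x | r m ≤ |g (m + 1) x - g m x|} ≠ ∞) :
    ∀ᵐ x ∂μ, ∃ L, Tendsto (g · x) atTop (𝓝 L) := by
  filter_upwards [ae_eventually_notMem hμ] with x hx
  obtain ⟨K, hK⟩ := eventually_atTop.1 hx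
  have hcauchy : CauchySeq fun m => g (m + K) x := by
    refine cauchySeq_of_dist_le_of_summable (fun m => r (m + K)) (fun m => ?_)
      ((summable_nat_add_iff K).2 hr)
    have := hK (m + K) (Nat.le_add_left K m)
    simp only [not_le] at this
    rw [dist_comm, Real.dist_eq, Nat.succ_eq_add_one, add_right_comm]
    exact this.le
  exact cauchySeq_tendsto_of_complete ((cauchySeq_shift K).1 hcauchy)

section RieszFischer

variable {I : Brick ι} {p : ℝ}

lemma ae_exists_tendsto_of_hasHK (hp : 0 < p) {g : ℕ → (ι → ℝ) → ℝ} {b r : ℕ → ℝ}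
    (hb : ∀ m, HasHK I (fun x => |g (m + 1) x - g m x| ^ p) (b m)) (hr : ∀ m, 0 < r m)
    (hr_sum : Summable r) (hbr : Summable fun m => b m / r m ^ p) :
    ∀ᵐ x ∂hkOuterMeasure I, ∃ L, Tendsto (g · x) atTop (𝓝 L) := by
  refine ae_exists_tendsto_of_summable hr_sum (ne_top_of_le_ne_top ?_
    (ENNReal.tsum_le_tsum fun m => mustar_setOf_le_abs_le hp (hb m) (hr m)))
  rw [← ENNReal.ofReal_tsum_of_nonneg (fun m => div_nonneg ((hb m).nonneg fun _ _ => by positivity)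
    (by have := hr m; positivity)) hbr]
  exact ENNReal.ofReal_ne_top

/-- The increments of `|g - f m|^p` are dominated through `abs_abs_rpow_sub_abs_rpow_le` with
parameter `θ m`. -/
theorem exists_tendsto_hasHK_rpow_abs_sub (hp : 0 < p) {g F : (ι → ℝ) → ℝ}
    {f : ℕ → (ι → ℝ) → ℝ} {a b θ : ℕ → ℝ}
    (hlim : ∀ᵐ x ∂hkOuterMeasure I, Tendsto (f · x) atTop (𝓝 (F x)))
    (ha : ∀ m, HasHK I (fun x => |g x - f m x| ^ p) (a m)) (ha_bdd : BddAbove (range a))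
    (hb : ∀ m, HasHK I (fun x => |f (m + 1) x - f m x| ^ p) (b m))
    (hθ : ∀ m, 0 < θ m) (hθ_sum : Summable fun m => (1 + θ m) ^ p - 1)
    (hb_sum : Summable fun m => ((1 + θ m) / θ m) ^ p * b m) :
    ∃ C, Tendsto a atTop (𝓝 C) ∧ HasHK I (fun x => |g x - F x| ^ p) C := by
  obtain ⟨S, hS⟩ := ha_bdd
  have ha0 : ∀ m, 0 ≤ a m := fun m => (ha m).nonneg fun _ _ => by positivity
  have hθ1 : ∀ m, 0 ≤ (1 + θ m) ^ p - 1 := fun m =>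
    sub_nonneg.2 (Real.one_le_rpow (by linarith [hθ m]) hp.le)
  refine exists_tendsto_hasHK_of_ae_tendsto ha (fun m => (((ha (m + 1)).add (ha m)).const_mul
    ((1 + θ m) ^ p - 1)).add ((hb m).const_mul (((1 + θ m) / θ m) ^ p))) ?_ (fun m x => ?_)
    (hlim.mono fun x hx => (tendsto_const_nhds.sub hx).abs.rpow_const (Or.inr hp.le))
  · refine .add (.of_nonneg_of_le (fun m => mul_nonneg (hθ1 m) (add_nonneg (ha0 _) (ha0 _)))
      (fun m => mul_le_mul_of_nonneg_left (add_le_add (hS (mem_range_self _))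
        (hS (mem_range_self _))) (hθ1 m)) (hθ_sum.mul_right (S + S))) hb_sum
  · have := abs_abs_rpow_sub_abs_rpow_le hp (hθ m) (g x - f (m + 1) x) (g x - f m x)
    rwa [sub_sub_sub_cancel_left, abs_sub_comm (f m x)] at this

lemma tendsto_zero_of_tendsto_comp {B : ℕ → ℕ → ℝ} (hB0 : ∀ j k, 0 ≤ B j k)
    (hcauchy : ∀ ε > 0, ∃ K, ∀ j ≥ K, ∀ k ≥ K, B j k < ε) {n : ℕ → ℕ}
    (hn : Tendsto n atTop atTop) {C : ℕ → ℝ}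
    (hC : ∀ j, Tendsto (fun m => B j (n m)) atTop (𝓝 (C j))) : Tendsto C atTop (𝓝 0) := by
  refine Metric.tendsto_atTop.2 fun ε hε => ?_
  obtain ⟨K, hK⟩ := hcauchy (ε / 2) (half_pos hε)
  refine ⟨K, fun j hj => ?_⟩
  have hle : C j ≤ ε / 2 :=
    le_of_tendsto (hC j) ((hn.eventually_ge_atTop K).mono fun m hm => (hK j hj _ hm).le)
  have h0 : 0 ≤ C j := ge_of_tendsto' (hC j) fun m => hB0 _ _
  rw [Real.dist_eq, sub_zero, abs_of_nonneg h0]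
  linarith

theorem exists_tendsto_zero_hasHK_rpow_abs_sub (hp : 0 < p) {f : ℕ → (ι → ℝ) → ℝ}
    {B : ℕ → ℕ → ℝ} (hB : ∀ j k, HasHK I (fun x => |f j x - f k x| ^ p) (B j k))
    (hcauchy : ∀ ε > 0, ∃ K, ∀ j ≥ K, ∀ k ≥ K, B j k < ε) :
    ∃ (F : (ι → ℝ) → ℝ) (C : ℕ → ℝ),
      (∀ j, HasHK I (fun x => |f j x - F x| ^ p) (C j)) ∧ Tendsto C atTop (𝓝 0) := by
  have hB0 : ∀ j k, 0 ≤ B j k := fun j k => (hB j k).nonneg fun _ _ => by positivity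
  choose θ hθ hθ_eq using fun m : ℕ =>
    exists_pos_one_add_rpow_eq hp (pow_pos (one_half_pos (α := ℝ)) m)
  have hK : ∀ m, 0 < ((1 + θ m) / θ m) ^ p := fun m => by have := hθ m; positivity
  -- `ρ` makes both the Chebyshev bounds and the weighted increments summable.
  set ρ : ℕ → ℝ := fun m => (1 / 2) ^ m * min (((1 / 2) ^ m) ^ p) (((1 + θ m) / θ m) ^ p)⁻¹
  have hρ : ∀ m, 0 < ρ m := fun m => by have := hK m; positivity
  obtain ⟨n, hn_mono, hn⟩ : ∃ n : ℕ → ℕ, StrictMono n ∧ ∀ m, ∀ j ≥ n m, ∀ k ≥ n m, B j k < ρ m :=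
    extraction_forall_of_eventually' fun m => (hcauchy (ρ m) (hρ m)).imp
      fun K hKρ N hN j hj k hk => hKρ j (hN.trans hj) k (hN.trans hk)
  have hb : ∀ m, B (n (m + 1)) (n m) ≤ ρ m :=
    fun m => (hn m _ (hn_mono.monotone m.le_succ) _ le_rfl).le
  have hb₁ : ∀ m, B (n (m + 1)) (n m) / ((1 / 2 : ℝ) ^ m) ^ p ≤ (1 / 2) ^ m := fun m => by
    rw [div_le_iff₀ (by positivity)]
    exact (hb m).trans (mul_le_mul_of_nonneg_left (min_le_left _ _) (by positivity))
  have hb₂ : ∀ m, ((1 + θ m) / θ m) ^ p * B (n (m + 1)) (n m) ≤ (1 / 2 : ℝ) ^ m := fun m => by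
    rw [← le_div_iff₀' (hK m), div_eq_mul_inv]
    exact (hb m).trans (mul_le_mul_of_nonneg_left (min_le_right _ _) (by positivity))
  have hconv := ae_exists_tendsto_of_hasHK hp (g := fun m => f (n m))
    (r := fun m => (1 / 2) ^ m) (fun m => hB (n (m + 1)) (n m)) (fun m => pow_pos one_half_pos m)
    summable_geometric_two <|
    .of_nonneg_of_le (fun m => div_nonneg (hB0 _ _) (by positivity)) hb₁ summable_geometric_two
  have hbdd : ∀ j, BddAbove (range fun m => B j (n m)) := fun j =>
    ⟨2 ^ p * (B j (n 0) + ρ 0), forall_mem_range.2 fun m =>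
      ((hB j (n m)).le (((hB j (n 0)).add (hB (n 0) (n m))).const_mul _)
        fun x _ => abs_sub_rpow_le hp _ _ _).trans <| mul_le_mul_of_nonneg_left
          (add_le_add_right (hn 0 _ le_rfl _ (hn_mono.monotone (Nat.zero_le m))).le _)
          (by positivity)⟩
  have hC : ∀ j, ∃ C, Tendsto (fun m => B j (n m)) atTop (𝓝 C) ∧
      HasHK I (fun x => |f j x - limUnder atTop (fun m => f (n m) x)| ^ p) C := fun j =>
    exists_tendsto_hasHK_rpow_abs_sub hp (f := fun m => f (n m))
      (hconv.mono fun x hx => tendsto_nhds_limUnder hx)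
      (fun m => hB j (n m)) (hbdd j) (fun m => hB (n (m + 1)) (n m)) hθ
      (by simpa only [hθ_eq, add_sub_cancel_left] using summable_geometric_two) <|
      .of_nonneg_of_le (fun m => mul_nonneg (hK m).le (hB0 _ _)) hb₂ summable_geometric_two
  choose C hC_lim hC using hC
  exact ⟨_, C, hC, tendsto_zero_of_tendsto_comp hB0 hcauchy hn_mono.tendsto_atTop hC_lim⟩

theorem ae_eq_of_tendsto_hasHK_rpow_abs_sub (hp : 0 < p) {f : ℕ → (ι → ℝ) → ℝ}
    {F G : (ι → ℝ) → ℝ} {C C' : ℕ → ℝ} (hF : ∀ j, HasHK I (fun x => |f j x - F x| ^ p) (C j))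
    (hG : ∀ j, HasHK I (fun x => |f j x - G x| ^ p) (C' j)) (hC : Tendsto C atTop (𝓝 0))
    (hC' : Tendsto C' atTop (𝓝 0)) : F =ᵐ[hkOuterMeasure I] G := by
  have hnull : ∀ r : ℝ, 0 < r → hkOuterMeasure I {x | r ≤ |F x - G x|} = 0 := by
    intro r hr
    have hle : ∀ j, hkOuterMeasure I {x | r ≤ |F x - G x|} ≤
        ENNReal.ofReal (2 ^ p * (C j + C' j) / r ^ p) := fun j =>
      (mustar_mono fun x (hx : r ≤ |F x - G x|) => (Real.rpow_le_rpow hr.le hx hp.le).trans <| by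
          simpa only [abs_sub_comm (F x)] using abs_sub_rpow_le hp (F x) (f j x) (G x)).trans <|
        mustar_setOf_le_le (((hF j).add (hG j)).const_mul _) (fun _ _ => by positivity)
          (by positivity)
    have hlim : Tendsto (fun j => ENNReal.ofReal (2 ^ p * (C j + C' j) / r ^ p)) atTop
        (𝓝 (ENNReal.ofReal 0)) :=
      ENNReal.tendsto_ofReal (by simpa using ((hC.add hC').const_mul (2 ^ p)).div_const (r ^ p))
    exact nonpos_iff_eq_zero.1 ((ge_of_tendsto' hlim hle).trans_eq ENNReal.ofReal_zero)
  refine ae_iff.2 (measure_mono_null (fun x (hx : F x ≠ G x) => ?_)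
    (measure_iUnion_null fun m : ℕ => hnull (1 / (m + 1)) Nat.one_div_pos_of_nat))
  obtain ⟨m, hm⟩ := exists_nat_one_div_lt (abs_pos.2 (sub_ne_zero.2 hx))
  exact mem_iUnion.2 ⟨m, hm.le⟩

end RieszFischer

lemma forall_ge_lt_of_forall_gt_lt {B : ℕ → ℕ → ℝ} (hsymm : ∀ j k, B j k = B k j)
    (hdiag : ∀ j, B j j = 0) (hcauchy : ∀ ε > (0 : ℝ), ∃ K : ℕ, ∀ j k, k ≥ K → j > k → B j k < ε) :
    ∀ ε > 0, ∃ K, ∀ j ≥ K, ∀ k ≥ K, B j k < ε := by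
  refine fun ε hε => (hcauchy ε hε).imp fun K hK j hj k hk => ?_
  rcases lt_trichotomy j k with hjk | rfl | hjk
  · exact hsymm j k ▸ hK k j hj hjk
  · exact hdiag j ▸ hε
  · exact hK j k hk hjk

theorem riesz_fischer_hk_general (I : Brick ι) (p : ℝ) (hp : 0 < p)
    (f : ℕ → (ι → ℝ) → ℝ)
    (B : ℕ → ℕ → ℝ)
    (hB : ∀ j k, HasHK I (fun P => |f j P - f k P| ^ p) (B j k))
    (hcauchy : ∀ ε > (0 : ℝ), ∃ K : ℕ, ∀ j k, k ≥ K → j > k → B j k < ε) :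
    ∃ (F : (ι → ℝ) → ℝ) (C : ℕ → ℝ),
      (∀ j, HasHK I (fun P => |f j P - F P| ^ p) (C j)) ∧
      Filter.Tendsto C Filter.atTop (nhds 0) ∧
      ∀ (G : (ι → ℝ) → ℝ) (C' : ℕ → ℝ),
        (∀ j, HasHK I (fun P => |f j P - G P| ^ p) (C' j)) →
        Filter.Tendsto C' Filter.atTop (nhds 0) →
        mustar I {P | F P ≠ G P} = 0 := by
  have hsymm : ∀ j k, B j k = B k j := fun j k =>
    (hB j k).unique (by simpa only [abs_sub_comm] using hB k j)
  have hdiag : ∀ j, B j j = 0 := fun j =>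
    (hB j j).unique (by simpa [hp.ne'] using hasHK_zero (I := I))
  obtain ⟨F, C, hC, hC0⟩ :=
    exists_tendsto_zero_hasHK_rpow_abs_sub hp hB (forall_ge_lt_of_forall_gt_lt hsymm hdiag hcauchy)
  exact ⟨F, C, hC, hC0, fun G C' hG hC' =>
    ae_iff.1 (ae_eq_of_tendsto_hasHK_rpow_abs_sub hp hC hG hC0 hC')⟩

/-- **Riesz–Fischer (mean completeness) for gauge integrals.** -/
theorem riesz_fischer_hk (I : Brick ι) (p : ℝ) (hp : 0 < p)
    (f : ℕ → (ι → ℝ) → ℝ)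
    (hmeas : ∀ j, ∀ b : ℝ, ∃ c : ℝ,
      HasHK I (fun P => if b ≤ f j P then (1 : ℝ) else 0) c)
    (B : ℕ → ℕ → ℝ)
    (hB : ∀ j k, HasHK I (fun P => |f j P - f k P| ^ p) (B j k))
    (hcauchy : ∀ ε > (0 : ℝ), ∃ K : ℕ, ∀ j k, k ≥ K → j > k → B j k < ε) :
    ∃ (F : (ι → ℝ) → ℝ) (C : ℕ → ℝ),
      (∀ j, HasHK I (fun P => |f j P - F P| ^ p) (C j)) ∧
      Filter.Tendsto C Filter.atTop (nhds 0) ∧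
      ∀ (G : (ι → ℝ) → ℝ) (C' : ℕ → ℝ),
        (∀ j, HasHK I (fun P => |f j P - G P| ^ p) (C' j)) →
        Filter.Tendsto C' Filter.atTop (nhds 0) →
        mustar I {P | F P ≠ G P} = 0 :=
  riesz_fischer_hk_general I p hp f B hB hcauchy
end

section
/- (Integration by parts for Stieltjes gauge integrals) Suppose V(Δf·Δg; I) = 0, i.e. the interval-point function ([u,v],x) ↦ (f(v)−f(u))(g(v)−g(u)) has Henstock variation zero on the interval I. If ∫_a^b f dg exists for each [a,b] ⊆ I, then ∫_a^b g df also exists and ∫_a^b f dg + ∫_a^b g df = f(b)g(b) − f(a)g(a). -/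
open Set Filter

/-- A tagged division of the compact interval `[a,b]`: partition points
`a = t 0 ≤ t 1 ≤ ⋯ ≤ t n = b` with a tag in each subinterval. -/
structure TaggedDiv1 (a b : ℝ) where
  n : ℕ
  t : Fin (n + 1) → ℝ
  tag : Fin n → ℝ
  mono : Monotone t
  first : t 0 = a
  last : t (Fin.last n) = b
  tag_mem : ∀ i : Fin n, tag i ∈ Set.Icc (t i.castSucc) (t i.succ)

/-- A tagged division is compatible with the gauge `δ` if each subinterval lies in the
open interval of radius `δ` about its tag. -/
def Compat1 {a b : ℝ} (D : TaggedDiv1 a b) (δ : ℝ → ℝ) : Prop :=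
  ∀ i : Fin D.n, Set.Icc (D.t i.castSucc) (D.t i.succ) ⊆
    Set.Ioo (D.tag i - δ (D.tag i)) (D.tag i + δ (D.tag i))

/-- The Riemann sum of `f` over a tagged division of `[a,b]`. -/
noncomputable def riemannSum1 {a b : ℝ} (f : ℝ → ℝ) (D : TaggedDiv1 a b) : ℝ :=
  ∑ i : Fin D.n, f (D.tag i) * (D.t i.succ - D.t i.castSucc)

/-- `f` has Henstock–Kurzweil integral `A` on `[a,b]`. -/
def HasHK1 (f : ℝ → ℝ) (a b A : ℝ) : Prop :=
  ∀ ε > 0, ∃ δ : ℝ → ℝ, (∀ x ∈ Set.Icc a b, 0 < δ x) ∧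
    ∀ D : TaggedDiv1 a b, Compat1 D δ → |riemannSum1 f D - A| < ε

open scoped ENNReal Classical

/-- The Stieltjes Riemann sum `∑ f(tag)·(g(v) − g(u))` over a tagged division of `[a,b]`. -/
noncomputable def stieltjesSum1 {a b : ℝ} (f g : ℝ → ℝ) (D : TaggedDiv1 a b) : ℝ :=
  ∑ i : Fin D.n, f (D.tag i) * (g (D.t i.succ) - g (D.t i.castSucc))

/-- `f` has Henstock–Kurzweil–Stieltjes integral `A` with respect to `g` on `[a,b]`. -/
def HasHKS (f g : ℝ → ℝ) (a b A : ℝ) : Prop :=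
  ∀ ε > 0, ∃ δ : ℝ → ℝ, (∀ x ∈ Set.Icc a b, 0 < δ x) ∧
    ∀ D : TaggedDiv1 a b, Compat1 D δ → |stieltjesSum1 f g D - A| < ε

/-- The Henstock variation of an interval-point function `h u v x` on `[a,b]`. -/
noncomputable def variation1 (a b : ℝ) (h : ℝ → ℝ → ℝ → ℝ) : ℝ≥0∞ :=
  ⨅ δ ∈ {δ : ℝ → ℝ | ∀ x ∈ Set.Icc a b, 0 < δ x},
    ⨆ D ∈ {D : TaggedDiv1 a b | Compat1 D δ},
      ENNReal.ofReal (∑ i : Fin D.n, |h (D.t i.castSucc) (D.t i.succ) (D.tag i)|)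

/-! For a tagged interval `([u, v], x)`,
`f(v)g(v) - f(u)g(u) = f(x)Δg + g(x)Δf + (ΔfΔg on [x, v]) - (ΔfΔg on [u, x])`.
Summed over a division of `[a, b]` the left side telescopes, so the Stieltjes sums for `∫ f dg`
and `∫ g df` add up to `f(b)g(b) - f(a)g(a)` up to an error bounded by `∑ |ΔfΔg|` over the
division split at its tags. The split division is as fine as the original one, and after padding
it by fine divisions of the rest of `[A, B]`, zero variation makes that error small. -/

theorem Finset.sum_range_two_mul {M : Type*} [AddCommMonoid M] (u : ℕ → M) (n : ℕ) :
    ∑ k ∈ Finset.range (2 * n), u k = ∑ k ∈ Finset.range n, (u (2 * k) + u (2 * k + 1)) := by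
  induction n with
  | zero => simp
  | succ n ih =>
    rw [show 2 * (n + 1) = 2 * n + 1 + 1 by ring, Finset.sum_range_succ, Finset.sum_range_succ,
      ih, Finset.sum_range_succ, add_assoc]

namespace TaggedDiv1

variable {a b c : ℝ}

/-- The `k`-th partition point, constant `= b` for `k ≥ D.n`. -/
def pt (D : TaggedDiv1 a b) (k : ℕ) : ℝ := D.t ⟨min k D.n, by omega⟩

/-- The tag of the `k`-th subinterval; the value `b` for `k ≥ D.n` is junk. -/
noncomputable def tagAt (D : TaggedDiv1 a b) (k : ℕ) : ℝ :=
  if h : k < D.n then D.tag ⟨k, h⟩ else b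

theorem pt_of_le (D : TaggedDiv1 a b) {k : ℕ} (hk : k ≤ D.n) :
    D.pt k = D.t ⟨k, by omega⟩ := by
  simp only [pt, min_eq_left hk]

theorem pt_zero (D : TaggedDiv1 a b) : D.pt 0 = a := by
  rw [pt_of_le D (Nat.zero_le _)]; exact D.first

theorem pt_n (D : TaggedDiv1 a b) : D.pt D.n = b := by
  rw [pt_of_le D le_rfl]; exact D.last

theorem t_castSucc (D : TaggedDiv1 a b) (i : Fin D.n) : D.t i.castSucc = D.pt i := by
  rw [pt_of_le D i.2.le]; rfl

theorem t_succ (D : TaggedDiv1 a b) (i : Fin D.n) : D.t i.succ = D.pt (i + 1) := by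
  rw [pt_of_le D i.2]; rfl

theorem tag_eq_tagAt (D : TaggedDiv1 a b) (i : Fin D.n) : D.tag i = D.tagAt i := by
  simp [tagAt]

theorem tagAt_mem (D : TaggedDiv1 a b) {k : ℕ} (hk : k < D.n) :
    D.tagAt k ∈ Icc (D.pt k) (D.pt (k + 1)) := by
  simpa only [t_castSucc, t_succ, tag_eq_tagAt] using D.tag_mem ⟨k, hk⟩

noncomputable def sum (G : ℝ → ℝ → ℝ → ℝ) (D : TaggedDiv1 a b) : ℝ :=
  ∑ i : Fin D.n, G (D.t i.castSucc) (D.t i.succ) (D.tag i)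

theorem sum_eq_sum_range (G : ℝ → ℝ → ℝ → ℝ) (D : TaggedDiv1 a b) :
    D.sum G = ∑ k ∈ Finset.range D.n, G (D.pt k) (D.pt (k + 1)) (D.tagAt k) := by
  simp only [sum, t_castSucc, t_succ, tag_eq_tagAt]
  exact Fin.sum_univ_eq_sum_range (fun k => G (D.pt k) (D.pt (k + 1)) (D.tagAt k)) D.n

theorem compat1_iff (D : TaggedDiv1 a b) (δ : ℝ → ℝ) :
    Compat1 D δ ↔ ∀ k < D.n, Icc (D.pt k) (D.pt (k + 1)) ⊆
      Ioo (D.tagAt k - δ (D.tagAt k)) (D.tagAt k + δ (D.tagAt k)) := by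
  simp only [Compat1, t_castSucc, t_succ, tag_eq_tagAt]
  exact ⟨fun h k hk => h ⟨k, hk⟩, fun h i => h i i.2⟩

theorem _root_.Compat1.mono {D : TaggedDiv1 a b} {δ δ' : ℝ → ℝ} (hD : Compat1 D δ)
    (hδ : ∀ x, δ x ≤ δ' x) : Compat1 D δ' := fun i =>
  (hD i).trans (Ioo_subset_Ioo (by linarith [hδ (D.tag i)]) (by linarith [hδ (D.tag i)]))

def ofNat (n : ℕ) (t x : ℕ → ℝ) (h0 : t 0 = a) (hn : t n = b)
    (hx : ∀ k < n, x k ∈ Icc (t k) (t (k + 1))) : TaggedDiv1 a b where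
  n := n
  t i := t i
  tag i := x i
  mono := Fin.monotone_iff_le_succ.2 fun i => (hx i i.2).1.trans (hx i i.2).2
  first := h0
  last := hn
  tag_mem i := hx i i.2

section ofNat

variable {n : ℕ} {t x : ℕ → ℝ} {h0 : t 0 = a} {hn : t n = b}
  {hx : ∀ k < n, x k ∈ Icc (t k) (t (k + 1))}

theorem sum_ofNat (G : ℝ → ℝ → ℝ → ℝ) :
    (ofNat n t x h0 hn hx).sum G = ∑ k ∈ Finset.range n, G (t k) (t (k + 1)) (x k) :=
  Fin.sum_univ_eq_sum_range (fun k => G (t k) (t (k + 1)) (x k)) n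

theorem compat1_ofNat_iff (δ : ℝ → ℝ) :
    Compat1 (ofNat n t x h0 hn hx) δ ↔
      ∀ k < n, Icc (t k) (t (k + 1)) ⊆ Ioo (x k - δ (x k)) (x k + δ (x k)) :=
  ⟨fun h k hk => h ⟨k, hk⟩, fun h i => h i i.2⟩

end ofNat

theorem ite_pt_eq_right (D₁ : TaggedDiv1 a b) (D₂ : TaggedDiv1 b c) {k : ℕ} (hk : D₁.n ≤ k) :
    (if k ≤ D₁.n then D₁.pt k else D₂.pt (k - D₁.n)) = D₂.pt (k - D₁.n) := by
  split_ifs with h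
  · rw [show k = D₁.n by omega, Nat.sub_self, pt_n, pt_zero]
  · rfl

noncomputable def concat (D₁ : TaggedDiv1 a b) (D₂ : TaggedDiv1 b c) : TaggedDiv1 a c :=
  ofNat (D₁.n + D₂.n) (fun k => if k ≤ D₁.n then D₁.pt k else D₂.pt (k - D₁.n))
    (fun k => if k < D₁.n then D₁.tagAt k else D₂.tagAt (k - D₁.n))
    (by simp [pt_zero])
    (by rw [ite_pt_eq_right D₁ D₂ (by omega), Nat.add_sub_cancel_left, pt_n])
    (fun k hk => by
      rcases lt_or_ge k D₁.n with hk₁ | hk₁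
      · simpa [hk₁, hk₁.le, Nat.succ_le_of_lt hk₁] using D₁.tagAt_mem hk₁
      · rw [ite_pt_eq_right D₁ D₂ hk₁, ite_pt_eq_right D₁ D₂ (by omega), if_neg (by omega),
          show k + 1 - D₁.n = k - D₁.n + 1 by omega]
        exact D₂.tagAt_mem (by omega))

theorem sum_concat (G : ℝ → ℝ → ℝ → ℝ) (D₁ : TaggedDiv1 a b) (D₂ : TaggedDiv1 b c) :
    (D₁.concat D₂).sum G = D₁.sum G + D₂.sum G := by
  rw [concat, sum_ofNat, Finset.sum_range_add, sum_eq_sum_range, sum_eq_sum_range]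
  congr 1
  · refine Finset.sum_congr rfl fun k hk => ?_
    have hk₁ : k < D₁.n := Finset.mem_range.1 hk
    simp [hk₁, hk₁.le, Nat.succ_le_of_lt hk₁]
  · refine Finset.sum_congr rfl fun k _ => ?_
    rw [ite_pt_eq_right D₁ D₂ (by omega), ite_pt_eq_right D₁ D₂ (by omega), if_neg (by omega),
      show D₁.n + k + 1 - D₁.n = k + 1 by omega, Nat.add_sub_cancel_left]

theorem _root_.Compat1.concat {D₁ : TaggedDiv1 a b} {D₂ : TaggedDiv1 b c} {δ : ℝ → ℝ}
    (h₁ : Compat1 D₁ δ) (h₂ : Compat1 D₂ δ) : Compat1 (D₁.concat D₂) δ := by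
  rw [compat1_iff] at h₁ h₂
  rw [TaggedDiv1.concat, compat1_ofNat_iff]
  intro k hk
  rcases lt_or_ge k D₁.n with hk₁ | hk₁
  · simpa [hk₁, hk₁.le, Nat.succ_le_of_lt hk₁] using h₁ k hk₁
  · rw [ite_pt_eq_right D₁ D₂ hk₁, ite_pt_eq_right D₁ D₂ (by omega), if_neg (by omega),
      show k + 1 - D₁.n = k - D₁.n + 1 by omega]
    exact h₂ _ (by omega)

def nil (a : ℝ) : TaggedDiv1 a a :=
  ofNat 0 (fun _ => a) (fun _ => a) rfl rfl (by simp)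

theorem compat1_nil (a : ℝ) (δ : ℝ → ℝ) : Compat1 (nil a) δ := fun i => i.elim0

noncomputable def single (ξ : ℝ) (hξ : ξ ∈ Icc a b) : TaggedDiv1 a b :=
  ofNat 1 (fun k => if k = 0 then a else b) (fun _ => ξ) rfl rfl (by simpa using hξ)

theorem compat1_single {ξ : ℝ} (hξ : ξ ∈ Icc a b) {δ : ℝ → ℝ}
    (h : Icc a b ⊆ Ioo (ξ - δ ξ) (ξ + δ ξ)) : Compat1 (single ξ hξ) δ := by
  rw [single, compat1_ofNat_iff]
  simpa using h

/-- Cousin's lemma. -/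
theorem exists_compat1 (hab : a ≤ b) {δ : ℝ → ℝ} (hδ : ∀ x ∈ Icc a b, 0 < δ x) :
    ∃ D : TaggedDiv1 a b, Compat1 D δ := by
  set s := {x ∈ Icc a b | ∃ D : TaggedDiv1 a x, Compat1 D δ}
  have ha : a ∈ s := ⟨⟨le_rfl, hab⟩, nil a, compat1_nil a δ⟩
  have hbdd : BddAbove s := ⟨b, fun x hx => hx.1.2⟩
  set c := sSup s
  have hac : a ≤ c := le_csSup hbdd ha
  have hcb : c ≤ b := csSup_le ⟨a, ha⟩ fun x hx => hx.1.2
  have hδc : 0 < δ c := hδ c ⟨hac, hcb⟩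
  obtain ⟨x, ⟨hx, D, hD⟩, hcx⟩ := exists_lt_of_lt_csSup ⟨a, ha⟩ (sub_lt_self c hδc)
  have hxc : x ≤ c := le_csSup hbdd ⟨hx, D, hD⟩
  -- one more interval tagged at `c` reaches any point of `[c, c + δ c)`
  have extend : ∀ y ∈ Icc c b, y < c + δ c → y ∈ s := fun y hy hyc =>
    ⟨⟨hac.trans hy.1, hy.2⟩, D.concat (single c ⟨hxc, hy.1⟩),
      Compat1.concat hD (compat1_single _ fun z hz => ⟨by linarith [hz.1], by linarith [hz.2]⟩)⟩
  rcases hcb.eq_or_lt with hcb | hcb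
  · obtain ⟨-, E, hE⟩ := extend c ⟨le_rfl, hcb.le⟩ (lt_add_of_pos_right c hδc)
    exact hcb ▸ ⟨E, hE⟩
  · have hy : min b (c + δ c / 2) ∈ s :=
      extend _ ⟨le_min hcb.le (by linarith), min_le_left _ _⟩
        ((min_le_right _ _).trans_lt (by linarith))
    have := le_csSup hbdd hy
    simp only [min_le_iff] at this
    rcases this with h | h <;> linarith

/-- The division obtained by splitting every subinterval `[u, v]` of `D` at its tag `x` into
`[u, x]` and `[x, v]`, both tagged at `x`. -/
noncomputable def refine (D : TaggedDiv1 a b) : TaggedDiv1 a b :=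
  ofNat (2 * D.n) (fun k => if k % 2 = 0 then D.pt (k / 2) else D.tagAt (k / 2))
    (fun k => D.tagAt (k / 2))
    (by simp [pt_zero])
    (by simp [pt_n])
    (fun k hk => by
      have hmem := D.tagAt_mem (k := k / 2) (by omega)
      rcases Nat.mod_two_eq_zero_or_one k with hk₂ | hk₂
      · rw [if_pos hk₂, if_neg (by omega), show (k + 1) / 2 = k / 2 by omega]
        exact ⟨hmem.1, le_rfl⟩
      · rw [if_neg (by omega), if_pos (by omega), show (k + 1) / 2 = k / 2 + 1 by omega]
        exact ⟨le_rfl, hmem.2⟩)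

theorem sum_refine (G : ℝ → ℝ → ℝ → ℝ) (D : TaggedDiv1 a b) :
    D.refine.sum G = ∑ k ∈ Finset.range D.n,
      (G (D.pt k) (D.tagAt k) (D.tagAt k) + G (D.tagAt k) (D.pt (k + 1)) (D.tagAt k)) := by
  rw [refine, sum_ofNat, Finset.sum_range_two_mul]
  refine Finset.sum_congr rfl fun k _ => ?_
  simp only [Nat.mul_mod_right, Nat.mul_add_mod, if_true, Nat.mul_div_right k two_pos,
    show (2 * k + 1) / 2 = k by omega, show (2 * k + 1 + 1) / 2 = k + 1 by omega,
    show (2 * k + 1 + 1) % 2 = 0 by omega]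
  rfl

theorem _root_.Compat1.refine {D : TaggedDiv1 a b} {δ : ℝ → ℝ} (hD : Compat1 D δ) :
    Compat1 D.refine δ := by
  rw [compat1_iff] at hD
  rw [TaggedDiv1.refine, compat1_ofNat_iff]
  intro k hk
  have hmem := D.tagAt_mem (k := k / 2) (by omega)
  refine Subset.trans ?_ (hD (k / 2) (by omega))
  rcases Nat.mod_two_eq_zero_or_one k with hk₂ | hk₂
  · rw [if_pos hk₂, if_neg (by omega), show (k + 1) / 2 = k / 2 by omega]
    exact Icc_subset_Icc le_rfl hmem.2
  · rw [if_neg (by omega), if_pos (by omega), show (k + 1) / 2 = k / 2 + 1 by omega]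
    exact Icc_subset_Icc hmem.1 le_rfl

theorem abs_sum_sub_le_sum_refine (Φ : ℝ → ℝ → ℝ) (D : TaggedDiv1 a b) :
    |D.sum (fun u v x => Φ x v - Φ u x)| ≤ D.refine.sum (fun u v _ => |Φ u v|) := by
  rw [sum_eq_sum_range, sum_refine]
  refine (Finset.abs_sum_le_sum_abs _ _).trans (Finset.sum_le_sum fun k _ => ?_)
  exact (abs_sub _ _).trans_eq (add_comm _ _)

theorem sum_sub_eq (F : ℝ → ℝ) (D : TaggedDiv1 a b) :
    D.sum (fun u v _ => F v - F u) = F b - F a := by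
  rw [sum_eq_sum_range, Finset.sum_range_sub (fun k => F (D.pt k)) D.n, pt_n, pt_zero]

end TaggedDiv1

theorem stieltjesSum1_add_stieltjesSum1 {a b : ℝ} (f g : ℝ → ℝ) (D : TaggedDiv1 a b) :
    stieltjesSum1 f g D + stieltjesSum1 g f D = f b * g b - f a * g a -
      D.sum (fun u v x => (f v - f x) * (g v - g x) - (f x - f u) * (g x - g u)) := by
  have hsplit : stieltjesSum1 f g D + stieltjesSum1 g f D +
      D.sum (fun u v x => (f v - f x) * (g v - g x) - (f x - f u) * (g x - g u)) =
      D.sum (fun u v _ => f v * g v - f u * g u) := by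
    simp only [stieltjesSum1, TaggedDiv1.sum, ← Finset.sum_add_distrib]
    exact Finset.sum_congr rfl fun i _ => by ring
  rw [TaggedDiv1.sum_sub_eq (fun x => f x * g x)] at hsplit
  linarith

theorem exists_gauge_sum_abs_lt_of_variation1_eq_zero {a b : ℝ} {h : ℝ → ℝ → ℝ → ℝ}
    (hvar : variation1 a b h = 0) {ε : ℝ} (hε : 0 < ε) :
    ∃ δ : ℝ → ℝ, (∀ x ∈ Icc a b, 0 < δ x) ∧
      ∀ D : TaggedDiv1 a b, Compat1 D δ → D.sum (fun u v x => |h u v x|) < ε := by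
  have hlt : variation1 a b h < ENNReal.ofReal ε := hvar ▸ ENNReal.ofReal_pos.2 hε
  simp only [variation1, iInf_lt_iff] at hlt
  obtain ⟨δ, hδ, hsup⟩ := hlt
  exact ⟨δ, hδ, fun D hD =>
    (ENNReal.ofReal_lt_ofReal_iff hε).1 ((le_iSup₂_of_le D hD le_rfl).trans_lt hsup)⟩

/-- A division of `[a, b]` is padded by Cousin divisions of `[A, a]` and `[b, B]`. -/
theorem exists_gauge_sum_abs_lt_of_variation1_eq_zero_of_le {A B a b : ℝ}
    {h : ℝ → ℝ → ℝ → ℝ} (hvar : variation1 A B h = 0) (hAa : A ≤ a) (hab : a ≤ b)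
    (hbB : b ≤ B) {ε : ℝ} (hε : 0 < ε) :
    ∃ δ : ℝ → ℝ, (∀ x ∈ Icc a b, 0 < δ x) ∧
      ∀ D : TaggedDiv1 a b, Compat1 D δ → D.sum (fun u v x => |h u v x|) < ε := by
  obtain ⟨δ, hδ, hsum⟩ := exists_gauge_sum_abs_lt_of_variation1_eq_zero hvar hε
  have hδ' : ∀ {c d}, A ≤ c → d ≤ B → ∀ x ∈ Icc c d, 0 < δ x := fun hc hd x hx =>
    hδ x ⟨hc.trans hx.1, hx.2.trans hd⟩
  refine ⟨δ, hδ' hAa hbB, fun D hD => ?_⟩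
  obtain ⟨L, hL⟩ := TaggedDiv1.exists_compat1 hAa (hδ' le_rfl (hab.trans hbB))
  obtain ⟨R, hR⟩ := TaggedDiv1.exists_compat1 hbB (hδ' (hAa.trans hab) le_rfl)
  have hpad := hsum _ (hL.concat (hD.concat hR))
  rw [TaggedDiv1.sum_concat, TaggedDiv1.sum_concat] at hpad
  have hL₀ : 0 ≤ L.sum (fun u v x => |h u v x|) := Finset.sum_nonneg fun _ _ => abs_nonneg _
  have hR₀ : 0 ≤ R.sum (fun u v x => |h u v x|) := Finset.sum_nonneg fun _ _ => abs_nonneg _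
  linarith

theorem integration_by_parts_general (A B : ℝ) (f g : ℝ → ℝ)
    (hvar : variation1 A B (fun u v _ => (f v - f u) * (g v - g u)) = 0)
    (S : ℝ → ℝ → ℝ)
    (hfg : ∀ a b, A ≤ a → a < b → b ≤ B → HasHKS f g a b (S a b)) :
    ∀ a b, A ≤ a → a < b → b ≤ B →
      ∃ T : ℝ, HasHKS g f a b T ∧ S a b + T = f b * g b - f a * g a := by
  intro a b hAa hab hbB
  refine ⟨f b * g b - f a * g a - S a b, fun ε hε => ?_, by ring⟩
  obtain ⟨δ₀, hδ₀, hS⟩ := hfg a b hAa hab hbB (ε / 2) (half_pos hε)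
  obtain ⟨δ₁, hδ₁, hsmall⟩ :=
    exists_gauge_sum_abs_lt_of_variation1_eq_zero_of_le hvar hAa hab.le hbB (half_pos hε)
  refine ⟨fun x => min (δ₀ x) (δ₁ x), fun x hx => lt_min (hδ₀ x hx) (hδ₁ x hx), fun D hD => ?_⟩
  have hfg_sum := hS D (hD.mono fun x => min_le_left _ _)
  have hcorr := (TaggedDiv1.abs_sum_sub_le_sum_refine (fun p q => (f q - f p) * (g q - g p))
    D).trans_lt (hsmall _ (hD.mono fun x => min_le_right _ _).refine)
  have hsum := stieltjesSum1_add_stieltjesSum1 f g D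
  rw [abs_lt] at hfg_sum hcorr ⊢
  constructor <;> linarith

/-- **Integration by parts.** If `V(Δf·Δg; [A,B]) = 0` and `∫ₐᵇ f dg` exists for every
`[a,b] ⊆ [A,B]`, then `∫ₐᵇ g df` exists as well and
`∫ₐᵇ f dg + ∫ₐᵇ g df = f(b)g(b) − f(a)g(a)`. -/
theorem integration_by_parts (A B : ℝ) (hAB : A < B) (f g : ℝ → ℝ)
    (hvar : variation1 A B (fun u v _ => (f v - f u) * (g v - g u)) = 0)
    (S : ℝ → ℝ → ℝ)
    (hfg : ∀ a b, A ≤ a → a < b → b ≤ B → HasHKS f g a b (S a b)) :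
    ∀ a b, A ≤ a → a < b → b ≤ B →
      ∃ T : ℝ, HasHKS g f a b T ∧ S a b + T = f b * g b - f a * g a :=
  integration_by_parts_general A B f g hvar S hfg
end
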